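/- For f, g ∈ L^∞(T), the sum T_f T_g + T_φ T_ψ is a Toeplitz operator if and only if (V H_{f̄} 1) ⊗ (V H_g 1) + (V H_{φ̄} 1) ⊗ (V H_ψ 1) = 0, and this holds if and only if either (i) (f̄ ∈ H² or g ∈ H²) and (φ̄ ∈ H² or ψ ∈ H²), or (ii) there is a nonzero constant λ with f − λφ ∈ conj(H²) and ψ + λg ∈ H². In all these cases T_f T_g + T_φ T_ψ = T_{fg+φψ}. -/

import Mathlib

open MeasureTheory Complex AddCircle
open scoped ENNReal ComplexConjugate InnerProductSpace

noncomputable section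

namespace ToeplitzProj

instance : Fact (0 < 2 * Real.pi) := ⟨by positivity⟩
instance : Fact ((1:ℝ≥0∞) ≤ ⊤) := ⟨le_top⟩

abbrev 𝕋 : Type := AddCircle (2 * Real.pi)
abbrev μT : Measure 𝕋 := haarAddCircle
abbrev L2 : Type := Lp ℂ 2 μT
abbrev Linf : Type := Lp ℂ ⊤ μT

/-- The rank-one operator `f ⊗ g`, acting by `h ↦ ⟨h, g⟩ f = ⟪g, h⟫ • f`. -/
def rankOne {H : Type*} [NormedAddCommGroup H] [InnerProductSpace ℂ H] (f g : H) :
    H →L[ℂ] H := (innerSL ℂ g).smulRight f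

theorem memLp_conj (h : L2) : MemLp (fun x => conj ((h : 𝕋 → ℂ) x)) 2 μT :=
  ⟨RCLike.continuous_conj.comp_aestronglyMeasurable (Lp.memLp h).1,
    by
      rw [show (fun x => conj ((h : 𝕋 → ℂ) x)) = conj (h : 𝕋 → ℂ) from rfl, eLpNorm_conj]
      exact (Lp.memLp h).2⟩

/-- Pointwise complex conjugation on `L²`. -/
def conjL2 (h : L2) : L2 := (memLp_conj h).toLp _

theorem memLp_mul (φ : Linf) (f : L2) :
    MemLp ((φ : 𝕋 → ℂ) • (f : 𝕋 → ℂ)) 2 μT :=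
  (Lp.memLp f).smul (Lp.memLp φ)

/-- Multiplication by an `L^∞` function, as a bounded operator on `L²`. -/
def mulCLM (φ : Linf) : L2 →L[ℂ] L2 :=
  LinearMap.mkContinuous
    { toFun := fun f => (memLp_mul φ f).toLp _
      map_add' := by
        intro f g
        rw [← MemLp.toLp_add (memLp_mul φ f) (memLp_mul φ g)]
        apply MemLp.toLp_congr
        filter_upwards [Lp.coeFn_add f g] with x hx
        simp only [Pi.smul_apply, smul_eq_mul, Pi.mul_apply, hx, Pi.add_apply, mul_add]
      map_smul' := by
        intro c f
        show (memLp_mul φ (c • f)).toLp _ = c • (memLp_mul φ f).toLp _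
        rw [← MemLp.toLp_const_smul c (memLp_mul φ f)]
        apply MemLp.toLp_congr
        filter_upwards [Lp.coeFn_smul c f] with x hx
        simp only [Pi.smul_apply, smul_eq_mul, Pi.mul_apply, hx]
        ring }
    ‖φ‖
    (by
      intro f
      simp only [LinearMap.coe_mk, AddHom.coe_mk]
      rw [Lp.norm_toLp]
      have h := eLpNorm_smul_le_mul_eLpNorm (p := ⊤) (q := 2) (r := 2)
        (Lp.memLp f).1 (Lp.memLp φ).1
      calc (eLpNorm ((φ : 𝕋 → ℂ) • (f : 𝕋 → ℂ)) 2 μT).toReal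
          ≤ (eLpNorm (φ : 𝕋 → ℂ) ⊤ μT * eLpNorm (f : 𝕋 → ℂ) 2 μT).toReal := by
            exact ENNReal.toReal_mono (by
              exact ENNReal.mul_ne_top (Lp.memLp φ).2.ne (Lp.memLp f).2.ne) h
        _ = ‖φ‖ * ‖f‖ := by
            rw [ENNReal.toReal_mul, Lp.norm_def, Lp.norm_def])

/-- The Hardy space `H²` as a subspace of `L²`: the functions whose negative Fourier
coefficients vanish. -/
def Hardy : Submodule ℂ L2 where
  carrier := {f : L2 | ∀ n : ℤ, n < 0 → ⟪(fourierLp 2 n : L2), f⟫_ℂ = 0}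
  add_mem' := by
    intro a b ha hb n hn
    rw [inner_add_right, ha n hn, hb n hn, add_zero]
  zero_mem' := by
    intro n hn
    exact inner_zero_right _
  smul_mem' := by
    intro c a ha n hn
    rw [inner_smul_right, ha n hn, mul_zero]

theorem isClosed_Hardy : IsClosed (Hardy : Set L2) := by
  have : (Hardy : Set L2)
      = ⋂ n : ℤ, ⋂ _ : n < 0, {f : L2 | ⟪(fourierLp 2 n : L2), f⟫_ℂ = 0} := by
    ext f
    simp only [Set.mem_iInter, Set.mem_setOf_eq, SetLike.mem_coe]
    exact Iff.rfl
  rw [this]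
  exact isClosed_iInter fun n => isClosed_iInter fun _ =>
    isClosed_eq (Continuous.inner continuous_const continuous_id) continuous_const

instance : CompleteSpace Hardy := isClosed_Hardy.completeSpace_coe

/-- Inclusion of the Hardy space into `L²`. -/
def inclH : Hardy →L[ℂ] L2 := Hardy.subtypeL

/-- The Riesz projection `P : L² → H²`. -/
def projH : L2 →L[ℂ] Hardy := Hardy.orthogonalProjectionOnto

/-- The Riesz projection, viewed as an operator `L² → L²`. -/
def PFull : L2 →L[ℂ] L2 := inclH ∘L projH

/-- The Toeplitz operator `T_φ f = P(φ f)` on the Hardy space. -/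
def Toep (φ : Linf) : Hardy →L[ℂ] Hardy := projH ∘L mulCLM φ ∘L inclH

/-- The Hankel operator `H_φ f = (I − P)(φ f)`, mapping `H²` into `L²`. -/
def Hank (φ : Linf) : Hardy →L[ℂ] L2 := (mulCLM φ ∘L inclH) - (inclH ∘L Toep φ)

/-- A continuous map on the circle, as an element of `L^∞`. -/
def cLinf (g : C(𝕋, ℂ)) : Linf := ContinuousMap.toLp (E := ℂ) ⊤ μT ℂ g

/-- The coordinate function `z = e^{ix}` in `L^∞`. -/
def zL : Linf := cLinf (fourier 1)

/-- The conjugate coordinate function `z̄ = e^{-ix}` in `L^∞`. -/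
def zbarL : Linf := cLinf (fourier (-1))

/-- The constant function `c` in `L^∞`. -/
def constL (c : ℂ) : Linf := cLinf (ContinuousMap.const _ c)

/-- An `L^∞` function, viewed as an element of `L²` (the measure is finite). -/
def toL2 (φ : Linf) : L2 :=
  ((Lp.memLp φ).mono_exponent (le_top : (2:ℝ≥0∞) ≤ ⊤)).toLp φ

/-- The constant function `1`, as an element of the Hardy space. -/
def oneH : Hardy :=
  ⟨(fourierLp 2 0 : L2), fun n hn => orthonormal_fourier.2 (show n ≠ 0 from hn.ne)⟩

/-- The anti-unitary operator `V` on `L²`, `(Vh)(w) = w̄ · conj (h w)`. -/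
def Vop (h : L2) : L2 := mulCLM zbarL (conjL2 h)

/-- `φ ∈ L^∞` is an inner function: `φ ∈ H²` and `|φ| = 1` a.e. -/
def IsInnerFn (u : Linf) : Prop :=
  toL2 u ∈ Hardy ∧ ∀ᵐ x ∂μT, ‖(u : 𝕋 → ℂ) x‖ = 1

/-- `φ ∈ L^∞` is nonconstant (as an a.e. class). -/
def Nonconst (u : Linf) : Prop := ¬ ∃ c : ℂ, (u : 𝕋 → ℂ) =ᵐ[μT] fun _ => c

/-- `Q` is an orthogonal projection: self-adjoint and idempotent. -/
def IsOrthoProj {H : Type*} [NormedAddCommGroup H] [InnerProductSpace ℂ H]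
    [CompleteSpace H] (Q : H →L[ℂ] H) : Prop :=
  IsSelfAdjoint Q ∧ Q ∘L Q = Q

theorem memLinf_conj (φ : Linf) : MemLp (fun x => conj ((φ : 𝕋 → ℂ) x)) ⊤ μT :=
  ⟨RCLike.continuous_conj.comp_aestronglyMeasurable (Lp.memLp φ).1,
    by
      rw [show (fun x => conj ((φ : 𝕋 → ℂ) x)) = conj (φ : 𝕋 → ℂ) from rfl, eLpNorm_conj]
      exact (Lp.memLp φ).2⟩

/-- Pointwise complex conjugation on `L^∞`. -/
def conjLinf (φ : Linf) : Linf := (memLinf_conj φ).toLp _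

/-- The pointwise product of two `L^∞` functions. -/
def mulLinf (φ ψ : Linf) : Linf :=
  (((Lp.memLp ψ).smul (Lp.memLp φ)) :
    MemLp ((φ : 𝕋 → ℂ) • (ψ : 𝕋 → ℂ)) ⊤ μT).toLp _

/-- The Hankel operator `H_φ = (I − P) M_φ P`, as an operator on all of `L²`. -/
def HankFull (φ : Linf) : L2 →L[ℂ] L2 := (1 - PFull) ∘L mulCLM φ ∘L PFull

/-!
Everything is computed on Fourier coefficients. For `h ∈ H²` one has `T_z h = z h` and
`P(z x) = z P x + x̂(-1)`, hence `T_{z̄} T_f T_g T_z h = T_f T_g h + (g h)^(-1) P(z̄ f)`, where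
`(g h)^(-1) = ⟪V H_g 1, h⟫` and `P(z̄ f) = V H_{f̄} 1`. So for `A = T_f T_g + T_φ T_ψ` the defect
`T_{z̄} A T_z - A` is the rank-two operator `(V H_{f̄} 1) ⊗ (V H_g 1) + (V H_{φ̄} 1) ⊗ (V H_ψ 1)`,
and `u₁ ⊗ v₁ + u₂ ⊗ v₂ = 0` iff one vector of each pair vanishes, or `u₁ = λ u₂` and
`v₂ = -λ̄ v₁` with `λ ≠ 0`. Since `V H_g 1 = 0` iff `g ∈ H²`, and `V H_g 1` depends
(conjugate-)linearly on `g`, this is (i) or (ii).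

For the symbol, `T_{fg} - T_f T_g = P M_f H_g`. Under (i) each such term vanishes: `H_g = 0` if
`g ∈ H²`, and `P M_f = 0` on `(H²)^⊥` if `f̄ ∈ H²`. Under (ii) the two terms cancel, because
`H_ψ = -λ H_g` and `P M_f = λ P M_φ` on `(H²)^⊥`.
-/

section Representatives

lemma mulCLM_coeFn (φ : Linf) (x : L2) :
    (mulCLM φ x : 𝕋 → ℂ) =ᵐ[μT] fun t => (φ : 𝕋 → ℂ) t * (x : 𝕋 → ℂ) t :=
  (memLp_mul φ x).coeFn_toLp

lemma toL2_coeFn (φ : Linf) : (toL2 φ : 𝕋 → ℂ) =ᵐ[μT] (φ : 𝕋 → ℂ) :=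
  MemLp.coeFn_toLp _

lemma conjL2_coeFn (x : L2) :
    (conjL2 x : 𝕋 → ℂ) =ᵐ[μT] fun t => conj ((x : 𝕋 → ℂ) t) :=
  MemLp.coeFn_toLp _

lemma conjLinf_coeFn (φ : Linf) :
    (conjLinf φ : 𝕋 → ℂ) =ᵐ[μT] fun t => conj ((φ : 𝕋 → ℂ) t) :=
  MemLp.coeFn_toLp _

lemma mulLinf_coeFn (φ ψ : Linf) :
    (mulLinf φ ψ : 𝕋 → ℂ) =ᵐ[μT] fun t => (φ : 𝕋 → ℂ) t * (ψ : 𝕋 → ℂ) t :=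
  MemLp.coeFn_toLp _

lemma cLinf_coeFn (g : C(𝕋, ℂ)) : (cLinf g : 𝕋 → ℂ) =ᵐ[μT] g :=
  ContinuousMap.coeFn_toLp (E := ℂ) μT (𝕜 := ℂ) (p := ⊤) g

end Representatives

section Multiplication

lemma mulCLM_comm (φ ψ : Linf) (x : L2) :
    mulCLM φ (mulCLM ψ x) = mulCLM ψ (mulCLM φ x) := by
  apply Lp.ext
  filter_upwards [mulCLM_coeFn φ (mulCLM ψ x), mulCLM_coeFn ψ x,
    mulCLM_coeFn ψ (mulCLM φ x), mulCLM_coeFn φ x] with t h1 h2 h3 h4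
  rw [h1, h2, h3, h4]
  ring

lemma mulCLM_mulLinf (φ ψ : Linf) (x : L2) :
    mulCLM (mulLinf φ ψ) x = mulCLM φ (mulCLM ψ x) := by
  apply Lp.ext
  filter_upwards [mulCLM_coeFn (mulLinf φ ψ) x, mulCLM_coeFn φ (mulCLM ψ x),
    mulCLM_coeFn ψ x, mulLinf_coeFn φ ψ] with t h1 h2 h3 h4
  rw [h1, h2, h3, h4]
  ring

lemma mulCLM_add (φ ψ : Linf) : mulCLM (φ + ψ) = mulCLM φ + mulCLM ψ := by
  ext1 x
  apply Lp.ext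
  filter_upwards [mulCLM_coeFn (φ + ψ) x, Lp.coeFn_add (mulCLM φ x) (mulCLM ψ x),
    mulCLM_coeFn φ x, mulCLM_coeFn ψ x, Lp.coeFn_add φ ψ] with t h1 h2 h3 h4 h5
  rw [add_apply, h1, h2, Pi.add_apply, h3, h4, h5, Pi.add_apply, add_mul]

lemma mulCLM_smul (c : ℂ) (φ : Linf) : mulCLM (c • φ) = c • mulCLM φ := by
  ext1 x
  apply Lp.ext
  filter_upwards [mulCLM_coeFn (c • φ) x, Lp.coeFn_smul c (mulCLM φ x),
    mulCLM_coeFn φ x, Lp.coeFn_smul c φ] with t h1 h2 h3 h4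
  rw [smul_apply, h1, h2, Pi.smul_apply, h3, h4, Pi.smul_apply, smul_eq_mul, smul_eq_mul,
    mul_assoc]

lemma mulCLM_sub (φ ψ : Linf) : mulCLM (φ - ψ) = mulCLM φ - mulCLM ψ := by
  rw [eq_sub_iff_add_eq, ← mulCLM_add, sub_add_cancel]

lemma mulCLM_fourierLp_zero (φ : Linf) : mulCLM φ (fourierLp 2 0) = toL2 φ := by
  apply Lp.ext
  filter_upwards [mulCLM_coeFn φ (fourierLp 2 0), coeFn_fourierLp 2 (0 : ℤ),
    toL2_coeFn φ] with t h1 h2 h3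
  rw [h1, h2, h3, fourier_zero, mul_one]

lemma mulCLM_zbarL_mulCLM_zL (x : L2) : mulCLM zbarL (mulCLM zL x) = x := by
  apply Lp.ext
  filter_upwards [mulCLM_coeFn zbarL (mulCLM zL x), mulCLM_coeFn zL x,
    cLinf_coeFn (fourier (-1)), cLinf_coeFn (fourier 1)] with t h1 h2 h3 h4
  rw [h1, h2, zbarL, zL, h3, h4, ← mul_assoc, ← fourier_add, neg_add_cancel, fourier_zero,
    one_mul]

end Multiplication

section Coefficients

def coeff (n : ℤ) : L2 →L[ℂ] ℂ := innerSL ℂ (fourierLp 2 n : L2)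

lemma coeff_apply (n : ℤ) (x : L2) : coeff n x = ⟪(fourierLp 2 n : L2), x⟫_ℂ := rfl

lemma mem_Hardy_iff {x : L2} : x ∈ Hardy ↔ ∀ n < 0, coeff n x = 0 := Iff.rfl

lemma ext_coeff {x y : L2} (h : ∀ n, coeff n x = coeff n y) : x = y := by
  apply fourierBasis.repr.injective
  ext n
  simpa only [HilbertBasis.repr_apply_apply, coe_fourierBasis, coeff_apply] using h n

lemma coeff_fourierLp (m n : ℤ) : coeff n (fourierLp 2 m) = if n = m then 1 else 0 :=
  orthonormal_iff_ite.mp orthonormal_fourier n m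

lemma coeff_eq_integral {x : L2} {F : 𝕋 → ℂ} (hx : (x : 𝕋 → ℂ) =ᵐ[μT] F) (n : ℤ) :
    coeff n x = ∫ t, conj (fourier n t) * F t ∂μT := by
  rw [coeff_apply, L2.inner_def]
  refine integral_congr_ae ?_
  filter_upwards [coeFn_fourierLp 2 n, hx] with t h1 h2
  rw [RCLike.inner_apply, h1, h2, mul_comm]

lemma inner_eq_tsum_coeff (x y : L2) : ⟪x, y⟫_ℂ = ∑' n : ℤ, conj (coeff n x) * coeff n y := by
  rw [← fourierBasis.tsum_inner_mul_inner x y]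
  simp only [coe_fourierBasis, coeff_apply, inner_conj_symm]

lemma conj_fourier_mul_fourier (n m : ℤ) (t : 𝕋) :
    conj (fourier n t) * fourier m t = conj (fourier (n - m) t) := by
  rw [← fourier_neg, ← fourier_neg, ← fourier_add, neg_sub, neg_add_eq_sub]

lemma coeff_mulCLM_fourierLp (φ : Linf) (m n : ℤ) :
    coeff n (mulCLM φ (fourierLp 2 m)) = coeff (n - m) (toL2 φ) := by
  rw [coeff_eq_integral (mulCLM_coeFn φ _), coeff_eq_integral (toL2_coeFn φ)]
  refine integral_congr_ae ?_
  filter_upwards [coeFn_fourierLp 2 m] with t ht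
  rw [ht, mul_comm ((φ : 𝕋 → ℂ) t), ← mul_assoc, conj_fourier_mul_fourier]

lemma coeff_mulCLM (φ : Linf) (x : L2) (n : ℤ) :
    coeff n (mulCLM φ x) = ∑' m : ℤ, coeff m x * coeff (n - m) (toL2 φ) := by
  have hx := (coeff n ∘L mulCLM φ).hasSum (fourierBasis.hasSum_repr x)
  rw [← ContinuousLinearMap.comp_apply, ← hx.tsum_eq]
  simp only [ContinuousLinearMap.comp_apply, map_smul, coeff_mulCLM_fourierLp, smul_eq_mul,
    HilbertBasis.repr_apply_apply, coe_fourierBasis]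
  rfl

lemma coeff_mulCLM_zL (x : L2) (n : ℤ) : coeff n (mulCLM zL x) = coeff (n - 1) x := by
  rw [coeff_eq_integral (mulCLM_coeFn zL x), coeff_eq_integral (ae_eq_refl _)]
  refine integral_congr_ae ?_
  filter_upwards [cLinf_coeFn (fourier 1)] with t ht
  rw [zL, ht, ← mul_assoc, conj_fourier_mul_fourier]

lemma coeff_mulCLM_zbarL (x : L2) (n : ℤ) : coeff n (mulCLM zbarL x) = coeff (n + 1) x := by
  rw [coeff_eq_integral (mulCLM_coeFn zbarL x), coeff_eq_integral (ae_eq_refl _)]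
  refine integral_congr_ae ?_
  filter_upwards [cLinf_coeFn (fourier (-1))] with t ht
  rw [zbarL, ht, ← mul_assoc, conj_fourier_mul_fourier, sub_neg_eq_add]

lemma coeff_conjL2 (x : L2) (n : ℤ) : coeff n (conjL2 x) = conj (coeff (-n) x) := by
  rw [coeff_eq_integral (conjL2_coeFn x), coeff_eq_integral (ae_eq_refl _), ← integral_conj]
  simp only [map_mul, fourier_neg, conj_conj]

lemma coeff_Vop (x : L2) (n : ℤ) : coeff n (Vop x) = conj (coeff (-1 - n) x) := by
  rw [Vop, coeff_mulCLM_zbarL, coeff_conjL2, neg_add_rev, ← sub_eq_add_neg]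

lemma coeff_toL2_conjLinf (φ : Linf) (n : ℤ) :
    coeff n (toL2 (conjLinf φ)) = conj (coeff (-n) (toL2 φ)) := by
  rw [coeff_eq_integral ((toL2_coeFn _).trans (conjLinf_coeFn φ)),
    coeff_eq_integral (toL2_coeFn φ), ← integral_conj]
  simp only [map_mul, fourier_neg, conj_conj]

lemma toL2_sub (φ ψ : Linf) : toL2 (φ - ψ) = toL2 φ - toL2 ψ := by
  simp only [← mulCLM_fourierLp_zero, mulCLM_sub, sub_apply]

lemma toL2_add (φ ψ : Linf) : toL2 (φ + ψ) = toL2 φ + toL2 ψ := by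
  simp only [← mulCLM_fourierLp_zero, mulCLM_add, add_apply]

lemma toL2_smul (c : ℂ) (φ : Linf) : toL2 (c • φ) = c • toL2 φ := by
  simp only [← mulCLM_fourierLp_zero, mulCLM_smul, smul_apply]

end Coefficients

section HardySpace

lemma coe_Toep_apply (φ : Linf) (h : Hardy) : (Toep φ h : L2) = PFull (mulCLM φ h) := rfl

lemma fourierLp_mem_Hardy {n : ℤ} (hn : 0 ≤ n) : (fourierLp 2 n : L2) ∈ Hardy := by
  rw [mem_Hardy_iff]
  intro m hm
  rw [coeff_fourierLp, if_neg (by omega)]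

lemma coeff_eq_zero_of_mem_orthogonal {x : L2} (hx : x ∈ Hardyᗮ) {n : ℤ} (hn : 0 ≤ n) :
    coeff n x = 0 :=
  Submodule.inner_right_of_mem_orthogonal (fourierLp_mem_Hardy hn) hx

lemma coeff_PFull (x : L2) (n : ℤ) : coeff n (PFull x) = if 0 ≤ n then coeff n x else 0 := by
  split_ifs with hn
  · rw [eq_comm, ← sub_eq_zero, ← map_sub]
    exact coeff_eq_zero_of_mem_orthogonal (Hardy.sub_starProjection_mem_orthogonal x) hn
  · exact Hardy.starProjection_apply_mem x n (by omega)

lemma PFull_eq_self {x : L2} (hx : x ∈ Hardy) : PFull x = x :=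
  Hardy.starProjection_eq_self_iff.2 hx

lemma mulCLM_mem_Hardy {g : Linf} (hg : toL2 g ∈ Hardy) {x : L2} (hx : x ∈ Hardy) :
    mulCLM g x ∈ Hardy := by
  rw [mem_Hardy_iff] at hg hx ⊢
  intro n hn
  rw [coeff_mulCLM]
  refine (tsum_congr fun m => ?_).trans tsum_zero
  rcases lt_or_ge m 0 with hm | hm
  · rw [hx m hm, zero_mul]
  · rw [hg (n - m) (by omega), mul_zero]

lemma PFull_mulCLM_eq_zero {f : Linf} (hf : toL2 (conjLinf f) ∈ Hardy) {x : L2}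
    (hx : x ∈ Hardyᗮ) : PFull (mulCLM f x) = 0 := by
  rw [mem_Hardy_iff] at hf
  refine ext_coeff fun n => ?_
  rw [map_zero, coeff_PFull]
  split_ifs with hn
  · rw [coeff_mulCLM]
    refine (tsum_congr fun m => ?_).trans tsum_zero
    rcases lt_or_ge m 0 with hm | hm
    · have hf' := congrArg conj (hf (m - n) (by omega))
      rw [coeff_toL2_conjLinf, conj_conj, map_zero, neg_sub] at hf'
      rw [hf', mul_zero]
    · rw [coeff_eq_zero_of_mem_orthogonal hx hm, zero_mul]
  · rfl

end HardySpace

section Hankel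

lemma Hank_apply (φ : Linf) (h : Hardy) : Hank φ h = mulCLM φ h - PFull (mulCLM φ h) := rfl

lemma Hank_mem_orthogonal (φ : Linf) (h : Hardy) : Hank φ h ∈ Hardyᗮ :=
  Hardy.sub_starProjection_mem_orthogonal _

lemma Hank_eq_zero {g : Linf} (hg : toL2 g ∈ Hardy) (h : Hardy) : Hank g h = 0 := by
  rw [Hank_apply, PFull_eq_self (mulCLM_mem_Hardy hg h.2), sub_self]

lemma Hank_add (φ ψ : Linf) : Hank (φ + ψ) = Hank φ + Hank ψ := by
  ext1 h
  simp only [Hank_apply, mulCLM_add, add_apply, map_add]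
  abel

lemma Hank_smul (c : ℂ) (φ : Linf) : Hank (c • φ) = c • Hank φ := by
  ext1 h
  simp only [Hank_apply, mulCLM_smul, smul_apply, map_smul, smul_sub]

lemma Hank_oneH (φ : Linf) : Hank φ oneH = toL2 φ - PFull (toL2 φ) := by
  rw [Hank_apply, show (oneH : L2) = fourierLp 2 0 from rfl, mulCLM_fourierLp_zero]

lemma coeff_Vop_Hank_oneH (g : Linf) (n : ℤ) :
    coeff n (Vop (Hank g oneH)) = if 0 ≤ n then conj (coeff (-1 - n) (toL2 g)) else 0 := by
  rw [coeff_Vop, Hank_oneH, map_sub, coeff_PFull]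
  split_ifs <;> first | omega | simp only [sub_zero, sub_self, map_zero]

lemma coeff_Vop_Hank_conjLinf_oneH (f : Linf) (n : ℤ) :
    coeff n (Vop (Hank (conjLinf f) oneH)) = if 0 ≤ n then coeff (n + 1) (toL2 f) else 0 := by
  rw [coeff_Vop_Hank_oneH, coeff_toL2_conjLinf, conj_conj, neg_sub, sub_neg_eq_add]

lemma Vop_Hank_oneH_mem_Hardy (g : Linf) : Vop (Hank g oneH) ∈ Hardy := by
  rw [mem_Hardy_iff]
  intro n hn
  rw [coeff_Vop_Hank_oneH, if_neg (by omega)]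

lemma Vop_Hank_oneH_eq_zero_iff (g : Linf) : Vop (Hank g oneH) = 0 ↔ toL2 g ∈ Hardy := by
  constructor
  · intro h k hk
    have hk' := congrArg (coeff (-1 - k)) h
    rw [coeff_Vop_Hank_oneH, if_pos (by omega), map_zero, map_eq_zero, sub_sub_cancel] at hk'
    exact hk'
  · intro hg
    refine ext_coeff fun n => ?_
    rw [coeff_Vop_Hank_oneH, map_zero]
    split_ifs with hn
    · rw [mem_Hardy_iff] at hg
      rw [hg (-1 - n) (by omega), map_zero]
    · rfl

lemma Vop_Hank_conjLinf_sub_smul_oneH (f φ : Linf) (l : ℂ) :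
    Vop (Hank (conjLinf (f - l • φ)) oneH)
      = Vop (Hank (conjLinf f) oneH) - l • Vop (Hank (conjLinf φ) oneH) := by
  refine ext_coeff fun n => ?_
  simp only [map_sub, map_smul, coeff_Vop_Hank_conjLinf_oneH, toL2_sub, toL2_smul, smul_eq_mul]
  split_ifs <;> ring

lemma Vop_Hank_add_smul_oneH (ψ g : Linf) (l : ℂ) :
    Vop (Hank (ψ + l • g) oneH) = Vop (Hank ψ oneH) + conj l • Vop (Hank g oneH) := by
  refine ext_coeff fun n => ?_
  simp only [map_add, map_smul, coeff_Vop_Hank_oneH, toL2_add, toL2_smul, smul_eq_mul, map_mul]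
  split_ifs <;> ring

end Hankel

section Compression

lemma PFull_mulCLM_zbarL_PFull (x : L2) :
    PFull (mulCLM zbarL (PFull x)) = PFull (mulCLM zbarL x) := by
  refine ext_coeff fun n => ?_
  simp only [coeff_PFull, coeff_mulCLM_zbarL]
  split_ifs <;> first | rfl | omega

lemma PFull_mulCLM_zL (x : L2) :
    PFull (mulCLM zL x) = mulCLM zL (PFull x) + coeff (-1) x • fourierLp 2 0 := by
  refine ext_coeff fun n => ?_
  simp only [map_add, map_smul, coeff_PFull, coeff_mulCLM_zL, coeff_fourierLp, smul_eq_mul]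
  rcases lt_trichotomy n 0 with hn | rfl | hn
  · simp [hn.not_ge, hn.ne, show ¬1 ≤ n by omega]
  · simp
  · simp [hn.le, hn.ne', show 1 ≤ n by omega]

lemma mulCLM_zL_mem_Hardy {x : L2} (hx : x ∈ Hardy) : mulCLM zL x ∈ Hardy := by
  rw [mem_Hardy_iff] at hx ⊢
  intro n hn
  rw [coeff_mulCLM_zL, hx _ (by omega)]

lemma PFull_mulCLM_zbarL_toL2 (f : Linf) :
    PFull (mulCLM zbarL (toL2 f)) = Vop (Hank (conjLinf f) oneH) := by
  refine ext_coeff fun n => ?_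
  rw [coeff_PFull, coeff_mulCLM_zbarL, coeff_Vop_Hank_conjLinf_oneH]

lemma coeff_neg_one_mulCLM {x : L2} (hx : x ∈ Hardy) (g : Linf) :
    coeff (-1) (mulCLM g x) = ⟪Vop (Hank g oneH), x⟫_ℂ := by
  rw [coeff_mulCLM, inner_eq_tsum_coeff]
  refine tsum_congr fun m => ?_
  rw [coeff_Vop_Hank_oneH]
  split_ifs with hm
  · rw [conj_conj, mul_comm]
  · rw [mem_Hardy_iff.1 hx m (by omega), map_zero, zero_mul, zero_mul]

lemma coe_Toep_zbarL_Toep_Toep_Toep_zL (f g : Linf) (h : Hardy) :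
    (Toep zbarL (Toep f (Toep g (Toep zL h))) : L2)
      = Toep f (Toep g h) + ⟪Vop (Hank g oneH), (h : L2)⟫_ℂ • Vop (Hank (conjLinf f) oneH) := by
  simp only [coe_Toep_apply]
  rw [PFull_eq_self (mulCLM_zL_mem_Hardy h.2), mulCLM_comm g zL, PFull_mulCLM_zL,
    map_add (mulCLM f), map_smul, mulCLM_fourierLp_zero, mulCLM_comm f zL, map_add PFull,
    map_smul, map_add (mulCLM zbarL), map_smul, map_add PFull, map_smul,
    PFull_mulCLM_zbarL_PFull, PFull_mulCLM_zbarL_PFull, mulCLM_zbarL_mulCLM_zL,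
    PFull_mulCLM_zbarL_toL2, coeff_neg_one_mulCLM h.2]

lemma Toep_zbarL_comp_comp_Toep_zL_eq_self_iff (f g φ ψ : Linf) :
    Toep zbarL ∘L ((Toep f ∘L Toep g + Toep φ ∘L Toep ψ) ∘L Toep zL)
        = Toep f ∘L Toep g + Toep φ ∘L Toep ψ
      ↔ ∀ h : Hardy,
          ⟪Vop (Hank g oneH), (h : L2)⟫_ℂ • Vop (Hank (conjLinf f) oneH)
            + ⟪Vop (Hank ψ oneH), (h : L2)⟫_ℂ • Vop (Hank (conjLinf φ) oneH) = 0 := by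
  rw [ContinuousLinearMap.ext_iff]
  refine forall_congr' fun h => ?_
  rw [← Subtype.coe_inj]
  simp only [ContinuousLinearMap.comp_apply, add_apply, map_add, Submodule.coe_add,
    coe_Toep_zbarL_Toep_Toep_Toep_zL]
  rw [add_add_add_comm, add_eq_left]

end Compression

section RankTwo

variable {𝕜 E F : Type*} [RCLike 𝕜] [NormedAddCommGroup E] [InnerProductSpace 𝕜 E]
  [AddCommGroup F] [Module 𝕜 F] {K : Submodule 𝕜 E}

lemma forall_inner_smul_eq_zero_iff {u : F} {v : E} (hv : v ∈ K) :
    (∀ h : K, ⟪v, (h : E)⟫_𝕜 • u = 0) ↔ u = 0 ∨ v = 0 := by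
  refine ⟨fun H => ?_, ?_⟩
  · rw [or_comm, ← inner_self_eq_zero (𝕜 := 𝕜)]
    exact smul_eq_zero.1 (H ⟨v, hv⟩)
  · rintro (rfl | rfl) h <;> simp

lemma forall_inner_smul_add_inner_smul_eq_zero_iff {u₁ u₂ : F} {v₁ v₂ : E} (hv₁ : v₁ ∈ K)
    (hv₂ : v₂ ∈ K) :
    (∀ h : K, ⟪v₁, (h : E)⟫_𝕜 • u₁ + ⟪v₂, (h : E)⟫_𝕜 • u₂ = 0) ↔
      ((u₁ = 0 ∨ v₁ = 0) ∧ (u₂ = 0 ∨ v₂ = 0)) ∨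
        ∃ l : 𝕜, l ≠ 0 ∧ u₁ = l • u₂ ∧ v₂ = -(conj l • v₁) := by
  constructor
  · intro H
    by_cases h₁ : u₁ = 0 ∨ v₁ = 0
    · refine Or.inl ⟨h₁, (forall_inner_smul_eq_zero_iff hv₂).1 fun h => ?_⟩
      rcases h₁ with rfl | rfl <;> simpa using H h
    -- testing against `v₁` gives `u₁ = l • u₂`; testing against `v₂ + l̄ • v₁` then shows it is `0`
    obtain ⟨hu₁, hv₁0⟩ : u₁ ≠ 0 ∧ v₁ ≠ 0 := not_or.1 h₁
    have hvv : ⟪v₁, v₁⟫_𝕜 ≠ 0 := inner_self_ne_zero.2 hv₁0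
    have hu : u₁ = (-(⟪v₂, v₁⟫_𝕜 / ⟪v₁, v₁⟫_𝕜)) • u₂ := by
      calc u₁ = (⟪v₁, v₁⟫_𝕜)⁻¹ • (⟪v₁, v₁⟫_𝕜 • u₁) := (inv_smul_smul₀ hvv u₁).symm
        _ = (⟪v₁, v₁⟫_𝕜)⁻¹ • -(⟪v₂, v₁⟫_𝕜 • u₂) := by
          rw [eq_neg_of_add_eq_zero_left (H ⟨v₁, hv₁⟩)]
        _ = _ := by rw [smul_neg, smul_smul, inv_mul_eq_div, neg_smul]
    generalize -(⟪v₂, v₁⟫_𝕜 / ⟪v₁, v₁⟫_𝕜) = l at hu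
    subst hu
    have hl : l ≠ 0 ∧ u₂ ≠ 0 := smul_ne_zero_iff.1 hu₁
    refine Or.inr ⟨l, hl.1, rfl, ?_⟩
    rw [eq_neg_iff_add_eq_zero, ← inner_self_eq_zero (𝕜 := 𝕜)]
    have hw : v₂ + conj l • v₁ ∈ K := K.add_mem hv₂ (K.smul_mem _ hv₁)
    have H' := H ⟨_, hw⟩
    rw [smul_smul, ← add_smul, smul_eq_zero, or_iff_left hl.2] at H'
    rw [inner_add_left, inner_smul_left, conj_conj]
    linear_combination H'
  · rintro (⟨h₁, h₂⟩ | ⟨l, -, rfl, rfl⟩) h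
    · rw [(forall_inner_smul_eq_zero_iff hv₁).2 h₁ h, (forall_inner_smul_eq_zero_iff hv₂).2 h₂ h,
        add_zero]
    · rw [inner_neg_left, inner_smul_left, conj_conj, smul_smul, ← add_smul, mul_comm,
        add_neg_cancel, zero_smul]

end RankTwo

/-- Condition (i) or (ii) of the theorem. -/
def ToeplitzSumCondition (f g φ ψ : Linf) : Prop :=
  ((toL2 (conjLinf f) ∈ Hardy ∨ toL2 g ∈ Hardy) ∧ (toL2 (conjLinf φ) ∈ Hardy ∨ toL2 ψ ∈ Hardy))
    ∨ ∃ l : ℂ, l ≠ 0 ∧ toL2 (conjLinf (f - l • φ)) ∈ Hardy ∧ toL2 (ψ + l • g) ∈ Hardy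

lemma forall_rankTwo_eq_zero_iff (f g φ ψ : Linf) :
    (∀ h : Hardy,
        ⟪Vop (Hank g oneH), (h : L2)⟫_ℂ • Vop (Hank (conjLinf f) oneH)
          + ⟪Vop (Hank ψ oneH), (h : L2)⟫_ℂ • Vop (Hank (conjLinf φ) oneH) = 0)
      ↔ ToeplitzSumCondition f g φ ψ := by
  rw [ToeplitzSumCondition, forall_inner_smul_add_inner_smul_eq_zero_iff (Vop_Hank_oneH_mem_Hardy g)
    (Vop_Hank_oneH_mem_Hardy ψ)]
  simp only [← Vop_Hank_oneH_eq_zero_iff, Vop_Hank_conjLinf_sub_smul_oneH,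
    Vop_Hank_add_smul_oneH, sub_eq_zero, add_eq_zero_iff_eq_neg]

section Product

lemma coe_Toep_mulLinf (f g : Linf) (h : Hardy) :
    (Toep (mulLinf f g) h : L2) = Toep f (Toep g h) + PFull (mulCLM f (Hank g h)) := by
  rw [coe_Toep_apply, coe_Toep_apply, coe_Toep_apply, Hank_apply, map_sub, map_sub,
    mulCLM_mulLinf, add_sub_cancel]

lemma PFull_mulCLM_Hank_add_eq_zero {f g φ ψ : Linf}
    (hcase : ToeplitzSumCondition f g φ ψ)
    (h : Hardy) :
    PFull (mulCLM f (Hank g h)) + PFull (mulCLM φ (Hank ψ h)) = 0 := by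
  rcases hcase with ⟨hfg, hφψ⟩ | ⟨l, -, hf, hψ⟩
  · have hvanish : ∀ {a b : Linf}, (toL2 (conjLinf a) ∈ Hardy ∨ toL2 b ∈ Hardy) →
        PFull (mulCLM a (Hank b h)) = 0 := by
      rintro a b (ha | hb)
      · exact PFull_mulCLM_eq_zero ha (Hank_mem_orthogonal b h)
      · rw [Hank_eq_zero hb, map_zero, map_zero]
    rw [hvanish hfg, hvanish hφψ, add_zero]
  · have hHψ : Hank ψ h = -(l • Hank g h) := by
      rw [eq_neg_iff_add_eq_zero, ← smul_apply, ← add_apply, ← Hank_smul, ← Hank_add,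
        Hank_eq_zero hψ]
    have hPf : PFull (mulCLM f (Hank g h)) = l • PFull (mulCLM φ (Hank g h)) := by
      have := PFull_mulCLM_eq_zero hf (Hank_mem_orthogonal g h)
      rwa [mulCLM_sub, mulCLM_smul, sub_apply, smul_apply, map_sub, map_smul,
        sub_eq_zero] at this
    rw [hHψ, hPf, map_neg, map_smul, map_neg, map_smul, add_neg_cancel]

lemma Toep_comp_add_Toep_comp_eq_Toep {f g φ ψ : Linf}
    (hcase : ToeplitzSumCondition f g φ ψ) :
    Toep f ∘L Toep g + Toep φ ∘L Toep ψ = Toep (mulLinf f g + mulLinf φ ψ) := by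
  ext1 h
  rw [← Subtype.coe_inj]
  simp only [add_apply, ContinuousLinearMap.comp_apply, Submodule.coe_add,
    coe_Toep_apply (mulLinf f g + mulLinf φ ψ), mulCLM_add, map_add]
  rw [← coe_Toep_apply, ← coe_Toep_apply, coe_Toep_mulLinf, coe_Toep_mulLinf, add_add_add_comm,
    PFull_mulCLM_Hank_add_eq_zero hcase h, add_zero]

end Product

/-- `T_f T_g + T_φ T_ψ` is a Toeplitz operator iff the rank-one operator
`(V H_{f̄} 1) ⊗ (V H_g 1) + (V H_{φ̄} 1) ⊗ (V H_ψ 1)` vanishes, iff either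
(i) (`f̄ ∈ H²` or `g ∈ H²`) and (`φ̄ ∈ H²` or `ψ ∈ H²`), or
(ii) `f − λφ ∈ conj(H²)` and `ψ + λg ∈ H²` for some nonzero `λ`;
and in all these cases `T_f T_g + T_φ T_ψ = T_{fg + φψ}`. -/
theorem sum_of_products_toeplitz_iff (f g φ ψ : Linf) :
    (Toep zbarL ∘L ((Toep f ∘L Toep g + Toep φ ∘L Toep ψ) ∘L Toep zL)
        = Toep f ∘L Toep g + Toep φ ∘L Toep ψ
      ↔ ∀ h : Hardy,
          ⟪Vop (Hank g oneH), (h : L2)⟫_ℂ • Vop (Hank (conjLinf f) oneH)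
            + ⟪Vop (Hank ψ oneH), (h : L2)⟫_ℂ • Vop (Hank (conjLinf φ) oneH) = 0) ∧
    (Toep zbarL ∘L ((Toep f ∘L Toep g + Toep φ ∘L Toep ψ) ∘L Toep zL)
        = Toep f ∘L Toep g + Toep φ ∘L Toep ψ
      ↔ ((toL2 (conjLinf f) ∈ Hardy ∨ toL2 g ∈ Hardy)
            ∧ (toL2 (conjLinf φ) ∈ Hardy ∨ toL2 ψ ∈ Hardy))
          ∨ ∃ l : ℂ, l ≠ 0 ∧ toL2 (conjLinf (f - l • φ)) ∈ Hardy
              ∧ toL2 (ψ + l • g) ∈ Hardy) ∧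
    (Toep zbarL ∘L ((Toep f ∘L Toep g + Toep φ ∘L Toep ψ) ∘L Toep zL)
        = Toep f ∘L Toep g + Toep φ ∘L Toep ψ
      → Toep f ∘L Toep g + Toep φ ∘L Toep ψ = Toep (mulLinf f g + mulLinf φ ψ)) := by
  have toeplitz_iff := Toep_zbarL_comp_comp_Toep_zL_eq_self_iff f g φ ψ
  have cases_iff := forall_rankTwo_eq_zero_iff f g φ ψ
  exact ⟨toeplitz_iff, toeplitz_iff.trans cases_iff,
    fun hT => Toep_comp_add_Toep_comp_eq_Toep (cases_iff.1 (toeplitz_iff.1 hT))⟩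

end ToeplitzProj
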